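/- Let n ≥ 2 and k ≥ 1. The number A_k of proper list-colorings of a path of length k under a type A (n,n−1)-list assignment equals ((n−1)/n)·((n−1)^{k+1} + (−1)^k). -/

import Mathlib

open SimpleGraph

open Classical in
/-- Number of proper colorings of `G` from list assignment `L`: functions `γ` with
`γ v ∈ L v` for all `v` and `γ v ≠ γ w` for adjacent `v, w`. -/
noncomputable def colCount {V : Type*} [Fintype V] (G : SimpleGraph V) (L : V → Finset ℕ) : ℕ :=
  ((Fintype.piFinset L).filter fun γ => ∀ v w, G.Adj v w → γ v ≠ γ w).card

/-- `G` is `n`-monophilic: the constant assignment `{1,…,n}` minimizes the number of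
list colorings among all `n`-list assignments. -/
def Monophilic {V : Type*} [Fintype V] (G : SimpleGraph V) (n : ℕ) : Prop :=
  ∀ L : V → Finset ℕ, (∀ v, (L v).card = n) →
    colCount G (fun _ => Finset.Icc 1 n) ≤ colCount G L

/-- A type A `(n,n-1)`-list assignment for the path with `k+1` vertices: all interior
vertices share a common `n`-list `T`, and both terminal vertices get the same
`(n-1)`-subset `S` of `T`. -/
def IsTypeA (n k : ℕ) (L : Fin (k + 1) → Finset ℕ) : Prop :=
  ∃ S T : Finset ℕ, S.card = n - 1 ∧ T.card = n ∧ S ⊆ T ∧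
    L 0 = S ∧ L (Fin.last k) = S ∧
    ∀ i : Fin (k + 1), i ≠ 0 → i ≠ Fin.last k → L i = T

/-- A type B `(n,n-1)`-list assignment: as in type A, but the two terminal
`(n-1)`-lists are distinct subsets of the common interior `n`-list. -/
def IsTypeB (n k : ℕ) (L : Fin (k + 1) → Finset ℕ) : Prop :=
  ∃ S₁ S₂ T : Finset ℕ, S₁.card = n - 1 ∧ S₂.card = n - 1 ∧ T.card = n ∧
    S₁ ⊆ T ∧ S₂ ⊆ T ∧ S₁ ≠ S₂ ∧
    L 0 = S₁ ∧ L (Fin.last k) = S₂ ∧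
    ∀ i : Fin (k + 1), i ≠ 0 → i ≠ Fin.last k → L i = T

/-!
Let `P_j` be the colorings of the path on `j + 1` vertices with list `S` at the first vertex
and `T ⊇ S` elsewhere, and `A_j ⊆ P_j` those whose last color lies in `S` (the type A colorings).
Appending a vertex with list `U` to a coloring leaves `|U \ {last color}|` choices, so
`|P_j| = |S| (|T| - 1)^j`, and since a color of `S` is excluded exactly when the last color lies
in `S`, `A_{j+1} + A_j = |S| |P_j|`. With `|S| = n - 1 = |T| - 1` this is
`A_{j+1} + A_j = (n - 1)^{j+2}`, `A_0 = n - 1`, whose solution is the closed form.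
-/

open Finset

open Classical in
noncomputable def listColorings {V : Type*} [Fintype V] (G : SimpleGraph V) (L : V → Finset ℕ) :
    Finset (V → ℕ) :=
  (Fintype.piFinset L).filter fun γ => ∀ v w, G.Adj v w → γ v ≠ γ w

lemma colCount_eq_card_listColorings {V : Type*} [Fintype V] (G : SimpleGraph V)
    (L : V → Finset ℕ) : colCount G L = #(listColorings G L) :=
  rfl

lemma forall_pathGraph_adj_ne_iff {α : Type*} {j : ℕ} (γ : Fin (j + 1) → α) :
    (∀ v w, (pathGraph (j + 1)).Adj v w → γ v ≠ γ w) ↔ ∀ i : Fin j, γ i.castSucc ≠ γ i.succ := by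
  refine ⟨fun h i => h _ _ (pathGraph_adj.2 (Or.inl (by simp))), fun h v w hvw => ?_⟩
  wlog hvw' : v.val + 1 = w.val generalizing v w
  · exact (this w v hvw.symm ((pathGraph_adj.1 hvw).resolve_left hvw')).symm
  convert h ⟨v, by omega⟩ using 2 <;> ext <;> simp [hvw']

namespace SimpleGraph.pathGraph

variable {j : ℕ}

lemma mem_listColorings {L : Fin (j + 1) → Finset ℕ} {γ : Fin (j + 1) → ℕ} :
    γ ∈ listColorings (pathGraph (j + 1)) L ↔
      (∀ i, γ i ∈ L i) ∧ ∀ i : Fin j, γ i.castSucc ≠ γ i.succ := by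
  simp only [listColorings, mem_filter, Fintype.mem_piFinset, forall_pathGraph_adj_ne_iff]

lemma mem_listColorings_snoc {L : Fin (j + 1) → Finset ℕ} {U : Finset ℕ}
    {γ : Fin (j + 2) → ℕ} :
    γ ∈ listColorings (pathGraph (j + 2)) (Fin.snoc L U) ↔
      Fin.init γ ∈ listColorings (pathGraph (j + 1)) L ∧
        γ (Fin.last (j + 1)) ∈ U.erase (Fin.init γ (Fin.last j)) := by
  simp only [mem_listColorings, Fin.forall_fin_succ' (n := j + 1), Fin.forall_fin_succ' (n := j),
    Fin.snoc_castSucc, Fin.snoc_last, Fin.succ_last, Fin.succ_castSucc, Fin.init, mem_erase]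
  tauto

lemma card_listColorings_snoc (L : Fin (j + 1) → Finset ℕ) (U : Finset ℕ) :
    #(listColorings (pathGraph (j + 2)) (Fin.snoc L U)) =
      ∑ γ ∈ listColorings (pathGraph (j + 1)) L, #(U.erase (γ (Fin.last j))) := by
  rw [← card_sigma]
  refine card_bij' (fun γ _ => ⟨Fin.init γ, γ (Fin.last (j + 1))⟩)
    (fun p _ => Fin.snoc p.1 p.2) (fun γ hγ => ?_) (fun p hp => ?_) (fun γ _ => ?_) (fun p _ => ?_)
  · exact mem_sigma.2 (mem_listColorings_snoc.1 hγ)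
  · simpa [mem_listColorings_snoc] using mem_sigma.1 hp
  · exact Fin.snoc_init_self γ
  · simp

end SimpleGraph.pathGraph

lemma listColorings_update_of_subset {V : Type*} [Fintype V] [DecidableEq V]
    (G : SimpleGraph V) (L : V → Finset ℕ) {a : V} {U : Finset ℕ} (hU : U ⊆ L a) :
    listColorings G (Function.update L a U) = (listColorings G L).filter (fun γ => γ a ∈ U) := by
  ext γ
  simp only [listColorings, mem_filter, Fintype.mem_piFinset, Function.update_apply]
  constructor
  · rintro ⟨hmem, hproper⟩
    refine ⟨⟨fun i => ?_, hproper⟩, by simpa using hmem a⟩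
    by_cases hi : i = a
    · subst hi; exact hU (by simpa using hmem i)
    · simpa [hi] using hmem i
  · rintro ⟨⟨hmem, hproper⟩, ha⟩
    refine ⟨fun i => ?_, hproper⟩
    split_ifs with hi
    · exact hi ▸ ha
    · exact hmem i

section TypeA

variable (S T : Finset ℕ)

def headList (j : ℕ) : Fin (j + 1) → Finset ℕ := fun i => if i = 0 then S else T

def typeAList (j : ℕ) : Fin (j + 1) → Finset ℕ := Function.update (headList S T j) (Fin.last j) S

variable {S T}

lemma headList_succ (j : ℕ) : headList S T (j + 1) = Fin.snoc (headList S T j) T := by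
  funext i
  refine Fin.lastCases ?_ (fun i => ?_) i
  · simp [headList, Fin.ext_iff]
  · simp [headList]

lemma typeAList_succ (j : ℕ) : typeAList S T (j + 1) = Fin.snoc (headList S T j) S := by
  rw [typeAList, headList_succ, Fin.update_snoc_last]

lemma typeAList_zero : typeAList S T 0 = headList S T 0 :=
  Function.update_eq_self_iff.2 (by simp [headList])

lemma headList_subset (hST : S ⊆ T) {j : ℕ} (i : Fin (j + 1)) : headList S T j i ⊆ T := by
  unfold headList; split_ifs <;> simp [hST]

lemma subset_headList (hST : S ⊆ T) {j : ℕ} (i : Fin (j + 1)) : S ⊆ headList S T j i := by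
  unfold headList; split_ifs <;> simp [hST]

lemma card_listColorings_headList (hST : S ⊆ T) (j : ℕ) :
    #(listColorings (pathGraph (j + 1)) (headList S T j)) = #S * (#T - 1) ^ j := by
  induction j with
  | zero =>
    have : listColorings (pathGraph 1) (headList S T 0) = Fintype.piFinset (headList S T 0) := by
      ext γ
      simp [pathGraph.mem_listColorings]
    simp [this, headList]
  | succ j ih =>
    rw [headList_succ, pathGraph.card_listColorings_snoc,
      sum_congr rfl fun γ hγ => card_erase_of_mem (headList_subset hST _
        ((pathGraph.mem_listColorings.1 hγ).1 (Fin.last j))),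
      sum_const, smul_eq_mul, ih, pow_succ, mul_assoc]

lemma card_typeAList_succ_add (hST : S ⊆ T) (j : ℕ) :
    #(listColorings (pathGraph (j + 2)) (typeAList S T (j + 1))) +
        #(listColorings (pathGraph (j + 1)) (typeAList S T j)) =
      #S * #(listColorings (pathGraph (j + 1)) (headList S T j)) := by
  rw [typeAList_succ, pathGraph.card_listColorings_snoc, typeAList,
    listColorings_update_of_subset _ _ (subset_headList hST _), card_filter,
    ← sum_add_distrib, sum_congr rfl fun γ _ => ?_, sum_const, smul_eq_mul, mul_comm]
  by_cases h : γ (Fin.last j) ∈ S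
  · simpa [h] using card_erase_add_one h
  · simp [h, erase_eq_of_notMem]

lemma card_typeAList (hST : S ⊆ T) (hT : #T = #S + 1) (j : ℕ) :
    ((#S : ℚ) + 1) * #(listColorings (pathGraph (j + 1)) (typeAList S T j)) =
      #S * ((#S : ℚ) ^ (j + 1) + (-1) ^ j) := by
  induction j with
  | zero =>
    rw [typeAList_zero, card_listColorings_headList hST]
    push_cast
    ring
  | succ j ih =>
    have h := card_typeAList_succ_add hST j
    rw [card_listColorings_headList hST, hT, Nat.add_sub_cancel] at h
    have hq : ((#(listColorings (pathGraph (j + 2)) (typeAList S T (j + 1))) : ℕ) : ℚ) +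
        #(listColorings (pathGraph (j + 1)) (typeAList S T j)) = #S * (#S * #S ^ j) := by
      exact_mod_cast h
    linear_combination ((#S : ℚ) + 1) * hq - ih

end TypeA

lemma IsTypeA.exists_eq_typeAList {n k : ℕ} {L : Fin (k + 1) → Finset ℕ} (hL : IsTypeA n k L) :
    ∃ S T : Finset ℕ, #S = n - 1 ∧ #T = n ∧ S ⊆ T ∧ L = typeAList S T k := by
  obtain ⟨S, T, hS, hT, hST, hL0, hLlast, hLmid⟩ := hL
  refine ⟨S, T, hS, hT, hST, funext fun i => ?_⟩
  simp only [typeAList, headList, Function.update_apply]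
  split_ifs with hlast h0
  · exact hlast ▸ hLlast
  · exact h0 ▸ hL0
  · exact hLmid i h0 hlast

theorem stmt6_general (n k : ℕ) (hn : 2 ≤ n)
    (LA : Fin (k + 1) → Finset ℕ) (hLA : IsTypeA n k LA) :
    (colCount (pathGraph (k + 1)) LA : ℚ) =
      ((n : ℚ) - 1) / n * (((n : ℚ) - 1) ^ (k + 1) + (-1) ^ k) := by
  obtain ⟨S, T, hS, hT, hST, rfl⟩ := hLA.exists_eq_typeAList
  have hcount := card_typeAList hST (by omega) k
  have hSn : (#S : ℚ) = n - 1 := by rw [hS, Nat.cast_sub (by omega), Nat.cast_one]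
  rw [hSn, sub_add_cancel] at hcount
  rw [colCount_eq_card_listColorings]
  have hn0 : (n : ℚ) ≠ 0 := Nat.cast_ne_zero.2 (by omega)
  field_simp
  linear_combination hcount

theorem stmt6 (n k : ℕ) (hn : 2 ≤ n) (hk : 1 ≤ k)
    (LA : Fin (k + 1) → Finset ℕ) (hLA : IsTypeA n k LA) :
    (colCount (pathGraph (k + 1)) LA : ℚ) =
      ((n : ℚ) - 1) / n * (((n : ℚ) - 1) ^ (k + 1) + (-1) ^ k) :=
  stmt6_general n k hn LA hLA
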